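/- arXiv:2307.06054 — 2 statements merged into one kernel-verified Lean document; each statement's English description precedes it below -/
import Mathlib

section
/- Let G be a d-regular graph with an even number of vertices and let (R,B) be a balanced colouring of G. Then P_2(B) ≥ P_2(R)² and P_2(R) ≥ P_2(B)²; that is, the pair (P_2(R),P_2(B)) lies in the region {(x,y) ∈ [0,1]² : y ≥ x² and x ≥ y²}. -/
/-!
Write `P₁(R) = (∑_{v ∈ R} d_R(v)) / (|R| d)` for the probability of staying in `R` for one
step. Since `d_R(v) ≤ d`, `P₂(R) ≤ P₁(R)`, and by Cauchy–Schwarz `P₁(R)² ≤ P₂(R)`. For a balanced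
colouring `P₁(R) = P₁(B)`: both sides of the colouring send the same number `|R| d - 2e(R)
= |B| d - 2e(B)` of edge ends across, so `e(R) = e(B)`. Hence `P₂(R)² ≤ P₁(R)² = P₁(B)² ≤ P₂(B)`.
-/

open Finset
open scoped Classical

/-- The number of neighbours of `v` lying in `R` (the degree of `v` into `R`). -/
noncomputable def degIn {V : Type*} (G : SimpleGraph V) (R : Finset V) (v : V) : ℕ :=
  (R.filter (fun w => G.Adj v w)).card

/-- `P₂(R)`: the probability that a random walk started at a uniform vertex of `R`
stays in `R` for two steps, in a `d`-regular graph. -/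
noncomputable def P2 {V : Type*} (G : SimpleGraph V) (d : ℕ) (R : Finset V) : ℝ :=
  (∑ v ∈ R, (degIn G R v : ℝ) ^ 2) / (R.card * d ^ 2)

noncomputable def P1 {V : Type*} (G : SimpleGraph V) (d : ℕ) (R : Finset V) : ℝ :=
  (∑ v ∈ R, (degIn G R v : ℝ)) / (R.card * d)

section

variable {V : Type*} (G : SimpleGraph V)

theorem sum_degIn_comm (R B : Finset V) :
    ∑ v ∈ R, degIn G B v = ∑ w ∈ B, degIn G R w := by
  simp only [degIn, card_filter]
  rw [sum_comm]
  simp only [G.adj_comm]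

theorem P2_nonneg (d : ℕ) (R : Finset V) : 0 ≤ P2 G d R := by
  unfold P2
  positivity

theorem sq_P1_le_P2 (d : ℕ) (R : Finset V) : P1 G d R ^ 2 ≤ P2 G d R := by
  rcases R.eq_empty_or_nonempty with rfl | hR
  · simp [P1, P2]
  have hcard : (R.card : ℝ) ≠ 0 := by exact_mod_cast hR.card_pos.ne'
  calc P1 G d R ^ 2 ≤ R.card * (∑ v ∈ R, (degIn G R v : ℝ) ^ 2) / (R.card * d) ^ 2 := by
        rw [P1, div_pow]; gcongr; exact sq_sum_le_card_mul_sum_sq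
    _ = P2 G d R := by rw [P2, mul_pow, sq (R.card : ℝ), mul_assoc, mul_div_mul_left _ _ hcard]

variable [Fintype V]

theorem degIn_le_degree (R : Finset V) (v : V) : degIn G R v ≤ G.degree v :=
  card_le_card fun w hw => (G.mem_neighborFinset v w).2 (mem_filter.1 hw).2

theorem degIn_add_degIn {R B : Finset V} (hcov : ∀ v, v ∈ R ∨ v ∈ B) (hdisj : Disjoint R B)
    (v : V) : degIn G R v + degIn G B v = G.degree v := by
  have hunion : R ∪ B = univ := eq_univ_of_forall fun w => mem_union.2 (hcov w)
  rw [degIn, degIn, ← card_union_of_disjoint (disjoint_filter_filter hdisj), ← filter_union,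
    hunion, ← G.card_neighborFinset_eq_degree]
  congr 1
  ext w
  simp

variable {G} {d : ℕ}

theorem sum_degIn_add_sum_degIn (hreg : G.IsRegularOfDegree d) {R B : Finset V}
    (hcov : ∀ v, v ∈ R ∨ v ∈ B) (hdisj : Disjoint R B) :
    ∑ v ∈ R, degIn G R v + ∑ v ∈ R, degIn G B v = R.card * d := by
  rw [← sum_add_distrib, sum_congr rfl fun v _ => (degIn_add_degIn G hcov hdisj v).trans (hreg v),
    sum_const, smul_eq_mul]

theorem sum_degIn_eq_of_card_eq (hreg : G.IsRegularOfDegree d) {R B : Finset V}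
    (hcov : ∀ v, v ∈ R ∨ v ∈ B) (hdisj : Disjoint R B) (hbal : R.card = B.card) :
    ∑ v ∈ R, degIn G R v = ∑ w ∈ B, degIn G B w := by
  have hR := sum_degIn_add_sum_degIn hreg hcov hdisj
  have hB := sum_degIn_add_sum_degIn hreg (fun v => (hcov v).symm) hdisj.symm
  have hcross := sum_degIn_comm G R B
  rw [← hbal] at hB
  omega

theorem P1_eq_of_card_eq (hreg : G.IsRegularOfDegree d) {R B : Finset V}
    (hcov : ∀ v, v ∈ R ∨ v ∈ B) (hdisj : Disjoint R B) (hbal : R.card = B.card) :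
    P1 G d R = P1 G d B := by
  rw [P1, P1, hbal]
  exact_mod_cast congrArg (fun s : ℕ => (s : ℝ) / (B.card * d))
    (sum_degIn_eq_of_card_eq hreg hcov hdisj hbal)

theorem P2_le_P1 (hdeg : ∀ v, G.degree v ≤ d) (R : Finset V) : P2 G d R ≤ P1 G d R := by
  rcases eq_or_ne d 0 with rfl | hd
  · simp [P2, P1]
  have hd' : (0 : ℝ) < d := by positivity
  have hle : ∑ v ∈ R, (degIn G R v : ℝ) ^ 2 ≤ (∑ v ∈ R, (degIn G R v : ℝ)) * d := by
    rw [sum_mul]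
    refine sum_le_sum fun v _ => ?_
    rw [sq]
    gcongr
    exact_mod_cast (degIn_le_degree G R v).trans (hdeg v)
  calc P2 G d R ≤ (∑ v ∈ R, (degIn G R v : ℝ)) * d / (R.card * d ^ 2) := by
        rw [P2]; gcongr
    _ = P1 G d R := by rw [P1, sq, ← mul_assoc, mul_div_mul_right _ _ hd'.ne']

theorem P1_le_one (hdeg : ∀ v, G.degree v ≤ d) (R : Finset V) : P1 G d R ≤ 1 := by
  refine div_le_one_of_le₀ ?_ (by positivity)
  calc ∑ v ∈ R, (degIn G R v : ℝ) ≤ ∑ _v ∈ R, (d : ℝ) :=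
        sum_le_sum fun v _ => by exact_mod_cast (degIn_le_degree G R v).trans (hdeg v)
    _ = R.card * d := by rw [sum_const, nsmul_eq_mul]

theorem sq_P2_le_P2_of_P1_eq (hdeg : ∀ v, G.degree v ≤ d) {R B : Finset V}
    (h : P1 G d R = P1 G d B) : P2 G d R ^ 2 ≤ P2 G d B :=
  calc P2 G d R ^ 2 ≤ P1 G d R ^ 2 := by gcongr; exacts [P2_nonneg G d R, P2_le_P1 hdeg R]
    _ = P1 G d B ^ 2 := by rw [h]
    _ ≤ P2 G d B := sq_P1_le_P2 G d B

theorem P2_mem_Icc (hdeg : ∀ v, G.degree v ≤ d) (R : Finset V) : P2 G d R ∈ Set.Icc 0 1 :=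
  ⟨P2_nonneg G d R, (P2_le_P1 hdeg R).trans (P1_le_one hdeg R)⟩

end

theorem P2_pair_mem_parabola_region_general {V : Type*} [Fintype V] (G : SimpleGraph V) (d : ℕ)
    (hreg : G.IsRegularOfDegree d)
    (R B : Finset V) (hcov : ∀ v, v ∈ R ∨ v ∈ B) (hdisj : Disjoint R B)
    (hbal : R.card = B.card) :
    (P2 G d R, P2 G d B) ∈
      {p : ℝ × ℝ | p.1 ∈ Set.Icc (0 : ℝ) 1 ∧ p.2 ∈ Set.Icc (0 : ℝ) 1 ∧
        p.2 ≥ p.1 ^ 2 ∧ p.1 ≥ p.2 ^ 2} := by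
  have hdeg : ∀ v, G.degree v ≤ d := fun v => (hreg v).le
  have hP1 : P1 G d R = P1 G d B := P1_eq_of_card_eq hreg hcov hdisj hbal
  exact ⟨P2_mem_Icc hdeg R, P2_mem_Icc hdeg B, sq_P2_le_P2_of_P1_eq hdeg hP1,
    sq_P2_le_P2_of_P1_eq hdeg hP1.symm⟩

/-- For any `d`-regular graph with an even number of vertices and any balanced colouring
`(R,B)`: `P₂(B) ≥ P₂(R)²` and `P₂(R) ≥ P₂(B)²`, i.e. the pair `(P₂(R), P₂(B))` lies in
`{(x,y) ∈ [0,1]² : y ≥ x² and x ≥ y²}`. -/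
theorem P2_pair_mem_parabola_region {V : Type*} [Fintype V] (G : SimpleGraph V) (d : ℕ)
    (hreg : G.IsRegularOfDegree d) (heven : Even (Fintype.card V))
    (R B : Finset V) (hcov : ∀ v, v ∈ R ∨ v ∈ B) (hdisj : Disjoint R B)
    (hbal : R.card = B.card) :
    (P2 G d R, P2 G d B) ∈
      {p : ℝ × ℝ | p.1 ∈ Set.Icc (0 : ℝ) 1 ∧ p.2 ∈ Set.Icc (0 : ℝ) 1 ∧
        p.2 ≥ p.1 ^ 2 ∧ p.1 ≥ p.2 ^ 2} :=
  P2_pair_mem_parabola_region_general G d hreg R B hcov hdisj hbal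
end

section
/- For every m ≥ 2, the set S_2 = { (x_1,…,x_m) ∈ ℤ^m : Σ_{i=1}^m i·x_i ≡ 0 (mod m+1) } is an independent exact 2-cover of the grid graph ℤ^m: S_2 is an independent set and every vertex of ℤ^m not in S_2 has exactly two neighbours in S_2. -/
/-- Adjacency in the grid graph `ℤ^m`: two vertices are adjacent iff they differ by `±1`
in exactly one coordinate. -/
def gridAdj (m : ℕ) (x y : Fin m → ℤ) : Prop :=
  ∃ j, (y j = x j + 1 ∨ y j = x j - 1) ∧ ∀ i, i ≠ j → y i = x i

/-- `S ⊆ ℤ^m` is an independent exact `r`-cover if `S` is an independent set in the grid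
graph `ℤ^m` and every vertex not in `S` is adjacent to exactly `r` elements of `S`. -/
def IsIndepExactCover (m r : ℕ) (S : Set (Fin m → ℤ)) : Prop :=
  (∀ x ∈ S, ∀ y ∈ S, ¬ gridAdj m x y) ∧
    ∀ x ∉ S, {y | y ∈ S ∧ gridAdj m x y}.ncard = r

/-!
Weight the coordinates by `w : Fin m → G` in an abelian group and take `S = {x | ∑ xᵢ • wᵢ = 0}`.
The neighbour `x ± eⱼ` has weighted sum `σ ± wⱼ`, where `σ` is that of `x`. If `w` is a bijection
onto `G ∖ {0}`, no two points of `S` are adjacent, and a point with `σ ≠ 0` has exactly the two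
neighbours `x + eⱼ` with `wⱼ = -σ` and `x - eₖ` with `wₖ = σ` in `S`. For `S₂` take
`G = ZMod (m + 1)` and `wᵢ = i + 1`.
-/

open Finset

section WeightedSum

variable {m : ℕ} {G : Type*} [AddCommGroup G]

lemma gridAdj_iff {x y : Fin m → ℤ} :
    gridAdj m x y ↔ ∃ j, ∃ c : ℤ, (c = 1 ∨ c = -1) ∧ y = x + Pi.single j c := by
  constructor
  · rintro ⟨j, hj, hne⟩
    refine ⟨j, y j - x j, by omega, funext fun i => ?_⟩
    by_cases hi : i = j
    · subst hi; simp
    · simp [hi, hne i hi]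
  · rintro ⟨j, c, hc, rfl⟩
    exact ⟨j, by simp; omega, fun i hi => by simp [hi]⟩

lemma sum_add_single_smul (w : Fin m → G) (x : Fin m → ℤ) (j : Fin m) (c : ℤ) :
    ∑ i, (x + Pi.single j c : Fin m → ℤ) i • w i = ∑ i, x i • w i + c • w j := by
  simp [add_smul, sum_add_distrib, Pi.single_apply, ite_smul]

lemma add_single_one_ne_add_single_neg_one (x : Fin m → ℤ) (j k : Fin m) :
    x + Pi.single j 1 ≠ x + Pi.single k (-1) := by
  intro h
  have := congrArg (fun z : Fin m → ℤ => ∑ i, z i) h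
  simp [sum_add_distrib] at this

variable {w : Fin m → G}

lemma setOf_mem_and_gridAdj_eq_pair (hw : Function.Injective w) {x : Fin m → ℤ} {jp jm : Fin m}
    (hjp : w jp = -∑ i, x i • w i) (hjm : w jm = ∑ i, x i • w i) :
    {y | y ∈ {x : Fin m → ℤ | ∑ i, x i • w i = 0} ∧ gridAdj m x y} =
      {x + Pi.single jp 1, x + Pi.single jm (-1)} := by
  ext y
  simp only [gridAdj_iff, Set.mem_ofPred_eq, Set.mem_insert_iff, Set.mem_singleton_iff]
  constructor
  · rintro ⟨hy, j, c, hc, rfl⟩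
    rw [sum_add_single_smul] at hy
    rcases hc with rfl | rfl
    · obtain rfl : j = jp := hw (by
        rw [hjp]; exact eq_neg_of_add_eq_zero_right (by simpa using hy))
      exact Or.inl rfl
    · obtain rfl : j = jm := hw (by
        rw [hjm]; exact (sub_eq_zero.1 (by simpa [sub_eq_add_neg] using hy)).symm)
      exact Or.inr rfl
  · rintro (rfl | rfl)
    · exact ⟨by rw [sum_add_single_smul, hjp, one_smul, add_neg_cancel], jp, 1, Or.inl rfl, rfl⟩
    · exact ⟨by rw [sum_add_single_smul, hjm, neg_one_smul, add_neg_cancel], jm, -1,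
        Or.inr rfl, rfl⟩

theorem isIndepExactCover_two_of_bijOn (hw : Set.BijOn w Set.univ {0}ᶜ) :
    IsIndepExactCover m 2 {x | ∑ i, x i • w i = 0} := by
  refine ⟨?_, fun x hx => ?_⟩
  · rintro x hx y hy hxy
    obtain ⟨j, c, hc, rfl⟩ := gridAdj_iff.1 hxy
    have hwj : w j ≠ 0 := hw.mapsTo (Set.mem_univ j)
    simp only [Set.mem_ofPred_eq] at hx hy
    rw [sum_add_single_smul, hx, zero_add] at hy
    rcases hc with rfl | rfl
    · exact hwj (by rwa [one_smul] at hy)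
    · exact hwj (by rwa [neg_one_smul, neg_eq_zero] at hy)
  · obtain ⟨jp, -, hjp⟩ := hw.surjOn (show _ ∈ ({0}ᶜ : Set G) from neg_ne_zero.2 hx)
    obtain ⟨jm, -, hjm⟩ := hw.surjOn (show _ ∈ ({0}ᶜ : Set G) from hx)
    rw [setOf_mem_and_gridAdj_eq_pair (Set.injOn_univ.1 hw.injOn) hjp hjm,
      Set.ncard_pair (add_single_one_ne_add_single_neg_one x jp jm)]

end WeightedSum

lemma val_natCast_succ {m : ℕ} (i : Fin m) : ((i.val + 1 : ℕ) : ZMod (m + 1)).val = i.val + 1 :=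
  (ZMod.val_natCast _ _).trans (Nat.mod_eq_of_lt (by omega))

lemma bijOn_natCast_succ (m : ℕ) :
    Set.BijOn (fun i : Fin m => ((i.val + 1 : ℕ) : ZMod (m + 1))) Set.univ {0}ᶜ := by
  refine ⟨fun i _ h => ?_, fun i _ j _ h => ?_, fun a (ha : a ≠ 0) => ?_⟩
  · have := val_natCast_succ i
    simp_all
  · have := congrArg ZMod.val h
    simp only [val_natCast_succ] at this
    exact Fin.ext (by omega)
  · have hpos : a.val ≠ 0 := (ZMod.val_ne_zero a).2 ha
    refine ⟨⟨a.val - 1, by have := ZMod.val_lt a; omega⟩, Set.mem_univ _, ?_⟩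
    simp only [Nat.sub_add_cancel (Nat.pos_of_ne_zero hpos), ZMod.natCast_zmod_val]

theorem exact_two_cover_general (m : ℕ) :
    IsIndepExactCover m 2
      {x : Fin m → ℤ | ((m : ℤ) + 1) ∣ ∑ i : Fin m, ((i.val : ℤ) + 1) * x i} := by
  have hS : {x : Fin m → ℤ | ((m : ℤ) + 1) ∣ ∑ i : Fin m, ((i.val : ℤ) + 1) * x i} =
      {x | ∑ i, x i • ((i.val + 1 : ℕ) : ZMod (m + 1)) = 0} := by
    ext x
    have hcast : ((m : ℤ) + 1) = ((m + 1 : ℕ) : ℤ) := by push_cast; rfl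
    rw [Set.mem_ofPred_eq, Set.mem_ofPred_eq, hcast, ← ZMod.intCast_zmod_eq_zero_iff_dvd]
    push_cast
    simp only [zsmul_eq_mul, mul_comm]
  rw [hS]
  exact isIndepExactCover_two_of_bijOn (bijOn_natCast_succ m)

/-- For every `m ≥ 2`, the set `S₂ = {x ∈ ℤ^m : ∑ i·xᵢ ≡ 0 (mod m+1)}` (coordinates
weighted `1,…,m`) is an independent exact `2`-cover of the grid graph `ℤ^m`. -/
theorem exact_two_cover (m : ℕ) (hm : 2 ≤ m) :
    IsIndepExactCover m 2
      {x : Fin m → ℤ | ((m : ℤ) + 1) ∣ ∑ i : Fin m, ((i.val : ℤ) + 1) * x i} :=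
  exact_two_cover_general m
end
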